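/- arXiv:1502.01658 — 2 statements merged into one kernel-verified Lean document; each statement's English description precedes it below -/
import Mathlib

section
/- Let R be symmetric positive definite, μ̂ ∈ ℝ^N, β_i ≥ 0, Ψ(w) = wᵀRw − wᵀμ̂ + Σ_i β_i|w_i|, and let w* minimize Ψ. Let I ⊆ {1,…,N} and suppose w̃ minimizes the restricted problem min{ wᵀR_{|I}w − wᵀμ̂_{|I} + Σ_{i∈I} β_i|w_i| } over ℝ^I. Let w be the zero-extension of w̃ to ℝ^N. If |(2Rw)_i − μ̂_i| ≤ β_i for all i ∉ I, then w = w*, i.e., w minimizes Ψ on ℝ^N. -/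
/-!
Write `g = 2Rw - μ̂` for the gradient of the smooth part at `w`. For symmetric `R`,
`Ψ v = Ψ w + (v - w)ᵀR(v - w) + E v` with `E v = ∑ᵢ (gᵢ (vᵢ - wᵢ) + βᵢ (|vᵢ| - |wᵢ|))`.
`E` is convex with `E w = 0`, so minimality of `w` over the coordinate subspace `ℝ^I` forces
`E ≥ 0` there (shrink `v - w` to first order). Off `I`, `wᵢ = 0` and `|gᵢ| ≤ βᵢ`, so each
coordinate outside `I` only adds `gᵢ vᵢ + βᵢ |vᵢ| ≥ 0`; hence `E ≥ 0` on all of `ℝ^N`, and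
`Ψ v ≥ Ψ w + (v - w)ᵀR(v - w)`, which for positive definite `R` gives both minimality and
uniqueness.
-/

open Matrix Filter Topology

theorem Matrix.IsSymm.dotProduct_mulVec_comm {n α : Type*} [Fintype n] [CommSemiring α]
    {R : Matrix n n α} (hR : R.IsSymm) (a b : n → α) : a ⬝ᵥ R *ᵥ b = b ⬝ᵥ R *ᵥ a := by
  rw [dotProduct_mulVec, ← mulVec_transpose, hR.eq, dotProduct_comm]

theorem nonneg_of_forall_Ioc_sq_mul_add_mul_nonneg {a b : ℝ}
    (h : ∀ t ∈ Set.Ioc (0 : ℝ) 1, 0 ≤ t ^ 2 * a + t * b) : 0 ≤ b := by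
  have hdiv : ∀ t ∈ Set.Ioc (0 : ℝ) 1, 0 ≤ t * a + b := fun t ht =>
    nonneg_of_mul_nonneg_right (by linarith [h t ht]) ht.1
  have hlim : Tendsto (fun t : ℝ => t * a + b) (𝓝[>] 0) (𝓝 (0 * a + b)) :=
    ((continuous_id.mul continuous_const).add continuous_const).tendsto' 0 _ rfl
      |>.mono_left nhdsWithin_le_nhds
  simpa using ge_of_tendsto hlim (eventually_of_mem (Ioc_mem_nhdsGT one_pos) hdiv)

namespace Lasso

variable {n : Type*} [Fintype n]

def objective (R : Matrix n n ℝ) (μ β v : n → ℝ) : ℝ :=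
  v ⬝ᵥ R *ᵥ v - v ⬝ᵥ μ + ∑ i, β i * |v i|

def excess (g β w v : n → ℝ) : ℝ :=
  ∑ i, (g i * (v i - w i) + β i * (|v i| - |w i|))

theorem excess_eq_dotProduct_add (g β w v : n → ℝ) :
    excess g β w v = g ⬝ᵥ (v - w) + (∑ i, β i * |v i| - ∑ i, β i * |w i|) := by
  simp only [excess, dotProduct, Pi.sub_apply, mul_sub, Finset.sum_add_distrib,
    Finset.sum_sub_distrib]

theorem objective_eq_add_quadratic_add_excess {R : Matrix n n ℝ} (hR : R.IsSymm)
    (μ β w v : n → ℝ) :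
    objective R μ β v = objective R μ β w + (v - w) ⬝ᵥ R *ᵥ (v - w)
      + excess (fun i => 2 * (R *ᵥ w) i - μ i) β w v := by
  have hg : (fun i => 2 * (R *ᵥ w) i - μ i) = (2 : ℝ) • (R *ᵥ w) - μ := rfl
  obtain ⟨d, rfl⟩ : ∃ d, v = w + d := ⟨v - w, by abel⟩
  have hcross : (R *ᵥ w) ⬝ᵥ d = d ⬝ᵥ R *ᵥ w := dotProduct_comm _ _
  have hμ : μ ⬝ᵥ d = d ⬝ᵥ μ := dotProduct_comm _ _
  simp only [objective, excess_eq_dotProduct_add, hg, add_sub_cancel_left, mulVec_add, add_dotProduct,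
    dotProduct_add, sub_dotProduct, smul_dotProduct, smul_eq_mul, hR.dotProduct_mulVec_comm w d]
  linear_combination (-2) * hcross + hμ

theorem excess_add_smul_sub_le {g β : n → ℝ} (hβ : ∀ i, 0 ≤ β i) (w v : n → ℝ) {t : ℝ}
    (ht : t ∈ Set.Icc (0 : ℝ) 1) :
    excess g β w (w + t • (v - w)) ≤ t * excess g β w v := by
  rw [excess, excess, Finset.mul_sum]
  refine Finset.sum_le_sum fun i _ => ?_
  have hconv : |w i + t * (v i - w i)| ≤ (1 - t) * |w i| + t * |v i| :=
    calc |w i + t * (v i - w i)| = |(1 - t) * w i + t * v i| := by ring_nf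
      _ ≤ |(1 - t) * w i| + |t * v i| := abs_add_le _ _
      _ = (1 - t) * |w i| + t * |v i| := by
        rw [abs_mul, abs_mul, abs_of_nonneg (sub_nonneg.2 ht.2), abs_of_nonneg ht.1]
  simp only [Pi.add_apply, Pi.smul_apply, Pi.sub_apply, smul_eq_mul, add_sub_cancel_left]
  nlinarith [mul_le_mul_of_nonneg_left hconv (hβ i)]

theorem excess_nonneg_of_isMinOn {R : Matrix n n ℝ} (hR : R.IsSymm) {μ β : n → ℝ}
    (hβ : ∀ i, 0 ≤ β i) {S : Set (n → ℝ)} (hS : Convex ℝ S) {w v : n → ℝ}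
    (hmin : IsMinOn (objective R μ β) S w) (hw : w ∈ S) (hv : v ∈ S) :
    0 ≤ excess (fun i => 2 * (R *ᵥ w) i - μ i) β w v := by
  refine nonneg_of_forall_Ioc_sq_mul_add_mul_nonneg (a := (v - w) ⬝ᵥ R *ᵥ (v - w)) fun t ht => ?_
  have ht' : t ∈ Set.Icc (0 : ℝ) 1 := Set.Ioc_subset_Icc_self ht
  have hle := isMinOn_iff.1 hmin _ (hS.add_smul_sub_mem hw hv ht')
  rw [objective_eq_add_quadratic_add_excess hR μ β w (w + t • (v - w)), add_sub_cancel_left,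
    mulVec_smul, dotProduct_smul, smul_dotProduct, smul_eq_mul, smul_eq_mul] at hle
  nlinarith [excess_add_smul_sub_le (g := fun i => 2 * (R *ᵥ w) i - μ i) hβ w v ht']

theorem excess_indicator_le {g β w : n → ℝ} {I : Set n} (hw : ∀ i ∉ I, w i = 0)
    (hg : ∀ i ∉ I, |g i| ≤ β i) (v : n → ℝ) :
    excess g β w (I.indicator v) ≤ excess g β w v := by
  refine Finset.sum_le_sum fun i _ => ?_
  by_cases hi : i ∈ I
  · simp [Set.indicator_of_mem hi]
  · have hgv : |g i * v i| ≤ β i * |v i| := by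
      rw [abs_mul]; exact mul_le_mul_of_nonneg_right (hg i hi) (abs_nonneg _)
    simpa [Set.indicator_of_notMem hi, hw i hi] using by linarith [neg_abs_le (g i * v i)]

theorem objective_add_quadratic_le {R : Matrix n n ℝ} (hR : R.IsSymm) {μ β : n → ℝ}
    (hβ : ∀ i, 0 ≤ β i) {I : Set n} {w : n → ℝ} (hw : ∀ i ∉ I, w i = 0)
    (hmin : ∀ v : n → ℝ, (∀ i ∉ I, v i = 0) → objective R μ β w ≤ objective R μ β v)
    (hout : ∀ i ∉ I, |2 * (R *ᵥ w) i - μ i| ≤ β i) (v : n → ℝ) :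
    objective R μ β w + (v - w) ⬝ᵥ R *ᵥ (v - w) ≤ objective R μ β v := by
  have hS : Convex ℝ {v : n → ℝ | ∀ i ∉ I, v i = 0} := fun x hx y hy a b _ _ _ i hi => by
    simp [hx i hi, hy i hi]
  have hexcess := (excess_nonneg_of_isMinOn hR hβ hS (isMinOn_iff.2 hmin) hw
    fun i hi => Set.indicator_of_notMem hi v).trans (excess_indicator_le hw hout v)
  rw [objective_eq_add_quadratic_add_excess hR μ β w v]
  exact le_add_of_nonneg_right hexcess

end Lasso

/-- If `w̃` solves the problem restricted to the index set `I`
(i.e. it minimizes `Ψ` among vectors supported in `I`), its zero-extension `w`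
satisfies `|(2Rw)_i − μ̂_i| ≤ β_i` for `i ∉ I`, and `w*` is the minimizer of
`Ψ`, then `w = w*`, i.e. `w` minimizes `Ψ` on all of `ℝ^N`. -/
theorem stmt11 (N : ℕ) (R : Matrix (Fin N) (Fin N) ℝ) (μ β : Fin N → ℝ)
    (hR : R.PosDef) (hβ : ∀ i, 0 ≤ β i)
    (Ψ : (Fin N → ℝ) → ℝ)
    (hΨ : ∀ w, Ψ w = w ⬝ᵥ (R *ᵥ w) - w ⬝ᵥ μ + ∑ i, β i * |w i|)
    (I : Set (Fin N)) (w wstar : Fin N → ℝ)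
    (hsupp : ∀ i ∉ I, w i = 0)
    (hmin : ∀ v : Fin N → ℝ, (∀ i ∉ I, v i = 0) → Ψ w ≤ Ψ v)
    (hout : ∀ i ∉ I, |2 * (R *ᵥ w) i - μ i| ≤ β i)
    (hstar : ∀ v, Ψ wstar ≤ Ψ v) :
    w = wstar ∧ ∀ v, Ψ w ≤ Ψ v := by
  obtain rfl : Ψ = Lasso.objective R μ β := funext hΨ
  have hgap := Lasso.objective_add_quadratic_le (isHermitian_iff_isSymm.1 hR.isHermitian) hβ
    hsupp hmin hout
  have hglobal : ∀ v, Lasso.objective R μ β w ≤ Lasso.objective R μ β v := fun v =>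
    (le_add_of_nonneg_right (by simpa using hR.posSemidef.dotProduct_mulVec_nonneg (v - w))).trans
      (hgap v)
  refine ⟨?_, hglobal⟩
  by_contra hne
  have hpos : 0 < (wstar - w) ⬝ᵥ R *ᵥ (wstar - w) := by
    simpa using hR.dotProduct_mulVec_pos (sub_ne_zero.2 (Ne.symm hne))
  linarith [hgap wstar, hstar w]
end

section
/- Let Ψ(w) = wᵀRw − wᵀμ̂ + Σ_i β_i|w_i| with R symmetric positive definite, all eigenvalues ≥ α₀ > 0, and β_i ≥ 0. Let M ≥ 2‖R‖₂ (operator norm), ε > 0, and η < min(ε, √(εα₀))/(√N · M). Suppose w̃ satisfies: (a) Σ_{i: |w̃_i| ≥ η, w̃_i ≠ 0} ((2Rw̃)_i − μ̂_i + β_i sgn(w̃_i))² ≤ 2εα₀, and (b) −β_i + ε ≤ (2Rw̃)_i − μ̂_i ≤ β_i − ε for every i with |w̃_i| < η. Define ζ by ζ_i = 0 if 0 < |w̃_i| < η or w̃_i = 0, and ζ_i = w̃_i otherwise. Then Ψ(ζ) ≤ Ψ(w*) + ((√2+1)²/2)·ε, where w* is the minimizer of Ψ. -/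
/-! Strong convexity of `Ψ` gives `Ψ v ≥ Ψ ζ + ⟪g, v - ζ⟫ + α₀ ‖v - ζ‖² ≥ Ψ ζ - ‖g‖² / (4α₀)`
for every subgradient `g` of `Ψ` at `ζ`. Take `g = 2Rζ - μ̂ + β sgn ζ` on `supp ζ` and `0` off it:
this is a subgradient because (b) survives the perturbation `2R(ζ - w̃)`, whose norm is at most
`M √N η < min(ε, √(εα₀))` since all entries of `ζ - w̃` are below `η`. On `supp ζ` the residual is
that of `w̃` plus this perturbation, so by (a) `‖g‖ ≤ √(2εα₀) + √(εα₀) = (√2 + 1) √(εα₀)`. -/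

open Matrix Finset

section

variable {ι : Type*}

lemma sqrt_sum_add_sq_le (s : Finset ι) (f g : ι → ℝ) :
    √(∑ i ∈ s, (f i + g i) ^ 2) ≤ √(∑ i ∈ s, f i ^ 2) + √(∑ i ∈ s, g i ^ 2) := by
  simp_rw [← Finset.sum_coe_sort s]
  simpa [EuclideanSpace.norm_eq] using
    norm_add_le (WithLp.toLp 2 fun i : s => f i : EuclideanSpace ℝ s)
      (WithLp.toLp 2 fun i : s => g i)

lemma abs_le_sqrt_sum_sq [Fintype ι] (v : ι → ℝ) (i : ι) : |v i| ≤ √(∑ j, v j ^ 2) :=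
  Real.abs_le_sqrt (single_le_sum (fun j _ => sq_nonneg (v j)) (mem_univ i))

lemma sqrt_sum_sq_le_of_abs_le [Fintype ι] {v : ι → ℝ} {η : ℝ} (hη : 0 ≤ η)
    (hv : ∀ i, |v i| ≤ η) : √(∑ i, v i ^ 2) ≤ √(Fintype.card ι) * η := by
  have : ∑ i, v i ^ 2 ≤ Fintype.card ι * η ^ 2 := by
    simpa using sum_le_sum fun i (_ : i ∈ univ) =>
      sq_le_sq' (abs_le.mp (hv i)).1 (abs_le.mp (hv i)).2
  calc √(∑ i, v i ^ 2) ≤ √(Fintype.card ι * η ^ 2) := Real.sqrt_le_sqrt this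
    _ = √(Fintype.card ι) * η := by rw [Real.sqrt_mul (Nat.cast_nonneg _), Real.sqrt_sq hη]

lemma abs_add_sign_mul_le (z t : ℝ) : |z| + Real.sign z * t ≤ |z + t| := by
  rcases lt_trichotomy z 0 with hz | rfl | hz
  · rw [abs_of_neg hz, Real.sign_of_neg hz]; linarith [neg_abs_le (z + t)]
  · simp
  · rw [abs_of_pos hz, Real.sign_of_pos hz]; linarith [le_abs_self (z + t)]

noncomputable def hardThreshold (η : ℝ) (w : ι → ℝ) : ι → ℝ :=
  fun i => if w i = 0 ∨ |w i| < η then 0 else w i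

lemma hardThreshold_eq_zero_iff {η : ℝ} {w : ι → ℝ} {i : ι} :
    hardThreshold η w i = 0 ↔ w i = 0 ∨ |w i| < η := by
  unfold hardThreshold
  split_ifs with h <;> simp_all

lemma hardThreshold_of_le {η : ℝ} {w : ι → ℝ} {i : ι} (h : η ≤ |w i|) :
    hardThreshold η w i = w i := by
  simp [hardThreshold, h.not_gt, eq_comm]

lemma abs_hardThreshold_sub_lt {η : ℝ} {w : ι → ℝ} {i : ι} (h : hardThreshold η w i - w i ≠ 0) :
    |hardThreshold η w i - w i| < η := by
  by_cases hη : η ≤ |w i|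
  · simp [hardThreshold_of_le hη] at h
  · have : hardThreshold η w i = 0 := hardThreshold_eq_zero_iff.mpr (.inr (not_le.mp hη))
    simpa [this] using not_le.mp hη

end

section

variable {ι : Type*} [Fintype ι]

lemma Matrix.IsSymm.dotProduct_mulVec_comm_s16 {R : Matrix ι ι ℝ} (hR : R.IsSymm) (x y : ι → ℝ) :
    x ⬝ᵥ (R *ᵥ y) = y ⬝ᵥ (R *ᵥ x) := by
  rw [dotProduct_mulVec, ← mulVec_transpose, hR.eq, dotProduct_comm]

def lassoObjective (R : Matrix ι ι ℝ) (μ β w : ι → ℝ) : ℝ :=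
  w ⬝ᵥ (R *ᵥ w) - w ⬝ᵥ μ + ∑ i, β i * |w i|

lemma lassoObjective_add {R : Matrix ι ι ℝ} (hR : R.IsSymm) (μ β w e : ι → ℝ) :
    lassoObjective R μ β (w + e) = lassoObjective R μ β w + e ⬝ᵥ (R *ᵥ e)
      + ∑ i, ((2 * (R *ᵥ w) i - μ i) * e i + β i * (|w i + e i| - |w i|)) := by
  simp only [lassoObjective, mulVec_add, dotProduct_add, add_dotProduct,
    hR.dotProduct_mulVec_comm_s16 w e, Pi.add_apply]
  simp only [dotProduct, sum_add_distrib, sub_mul, mul_sub, sum_sub_distrib,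
    ← mul_sum, mul_assoc]
  simp only [mul_comm (e _)]
  ring

lemma lassoObjective_le_add_sum_sq_div {R : Matrix ι ι ℝ} (hR : R.IsSymm) {α₀ : ℝ} (hα₀ : 0 < α₀)
    (heig : ∀ v : ι → ℝ, α₀ * ∑ i, v i ^ 2 ≤ v ⬝ᵥ (R *ᵥ v)) {μ β : ι → ℝ} (hβ : ∀ i, 0 ≤ β i)
    {w : ι → ℝ} (hzero : ∀ i, w i = 0 → |2 * (R *ᵥ w) i - μ i| ≤ β i) (v : ι → ℝ) :
    lassoObjective R μ β w ≤ lassoObjective R μ β v +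
      (∑ i ∈ univ.filter (fun i => w i ≠ 0),
        (2 * (R *ᵥ w) i - μ i + β i * Real.sign (w i)) ^ 2) / (4 * α₀) := by
  set c : ι → ℝ := fun i => 2 * (R *ᵥ w) i - μ i
  set g : ι → ℝ := fun i => if w i = 0 then 0 else c i + β i * Real.sign (w i)
  set e := v - w
  have hsubgrad : ∀ i, g i * e i ≤ c i * e i + β i * (|w i + e i| - |w i|) := by
    intro i
    by_cases hw : w i = 0
    · have := abs_le.mp (hzero i hw)
      simp only [g, if_pos hw, hw, zero_add, abs_zero, sub_zero, zero_mul]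
      rcases le_total 0 (e i) with he | he
      · rw [abs_of_nonneg he]; nlinarith
      · rw [abs_of_nonpos he]; nlinarith
    · simp only [g, if_neg hw]
      nlinarith [abs_add_sign_mul_le (w i) (e i), hβ i]
  have hg : ∑ i ∈ univ.filter (fun i => w i ≠ 0), (c i + β i * Real.sign (w i)) ^ 2
      = ∑ i, g i ^ 2 := by
    rw [sum_filter]; exact sum_congr rfl fun i _ => by by_cases hw : w i = 0 <;> simp [g, hw]
  set G := √(∑ i, g i ^ 2)
  set E := √(∑ i, e i ^ 2)
  have hcs : -(G * E) ≤ ∑ i, g i * e i := by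
    have := Real.sum_mul_le_sqrt_mul_sqrt univ (-g) e
    simp only [Pi.neg_apply, neg_sq, neg_mul, sum_neg_distrib] at this
    linarith
  have hamgm : G * E - α₀ * E ^ 2 ≤ G ^ 2 / (4 * α₀) := by
    rw [le_div_iff₀ (by positivity)]; nlinarith [sq_nonneg (2 * α₀ * E - G)]
  have hv : v = w + e := by simp [e]
  rw [hv, lassoObjective_add hR, hg, ← Real.sq_sqrt (sum_nonneg fun i _ => sq_nonneg (g i))]
  have := heig e
  rw [← Real.sq_sqrt (sum_nonneg fun i _ => sq_nonneg (e i))] at this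
  linarith [sum_le_sum fun i (_ : i ∈ univ) => hsubgrad i]

lemma sqrt_sum_sq_two_mulVec_lt {R : Matrix ι ι ℝ} {M η c : ℝ} (hc : 0 < c)
    (hM : ∀ v : ι → ℝ, √(∑ i, (R *ᵥ v) i ^ 2) ≤ M / 2 * √(∑ i, v i ^ 2))
    (hη : η < c / (√(Fintype.card ι) * M)) {d : ι → ℝ} (hd : ∀ i, d i ≠ 0 → |d i| < η) :
    √(∑ i, (2 * (R *ᵥ d) i) ^ 2) < c := by
  rcases le_or_gt η 0 with hη0 | hη0
  · have : d = 0 := funext fun i => by_contra fun h => (abs_nonneg _).not_gt ((hd i h).trans_le hη0)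
    simp [this, hc]
  have hden : 0 < √(Fintype.card ι) * M := (div_pos_iff_of_pos_left hc).mp (hη0.trans hη)
  have hM0 : 0 < M := pos_of_mul_pos_right hden (Real.sqrt_nonneg _)
  have hdη : ∀ i, |d i| ≤ η := fun i => by
    by_cases h : d i = 0
    · simp [h, hη0.le]
    · exact (hd i h).le
  calc √(∑ i, (2 * (R *ᵥ d) i) ^ 2) = 2 * √(∑ i, (R *ᵥ d) i ^ 2) := by
        simp_rw [mul_pow, ← mul_sum]
        rw [Real.sqrt_mul (by norm_num), Real.sqrt_sq (by norm_num)]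
    _ ≤ M * √(∑ i, d i ^ 2) := by linarith [hM d]
    _ ≤ M * (√(Fintype.card ι) * η) :=
        mul_le_mul_of_nonneg_left (sqrt_sum_sq_le_of_abs_le hη0.le hdη) hM0.le
    _ = η * (√(Fintype.card ι) * M) := by ring
    _ < c := (lt_div_iff₀ hden).mp hη

lemma filter_hardThreshold_ne_zero {η : ℝ} {w : ι → ℝ} :
    univ.filter (fun i => hardThreshold η w i ≠ 0)
      = univ.filter (fun i => w i ≠ 0 ∧ η ≤ |w i|) := by
  ext i
  simp [hardThreshold_eq_zero_iff, not_or]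

lemma abs_grad_hardThreshold_le {R : Matrix ι ι ℝ} {μ β w : ι → ℝ} {η ε : ℝ}
    (hb : ∀ i, (w i = 0 ∨ |w i| < η) →
        -β i + ε ≤ 2 * (R *ᵥ w) i - μ i ∧ 2 * (R *ᵥ w) i - μ i ≤ β i - ε)
    (hq : √(∑ i, (2 * (R *ᵥ (hardThreshold η w - w)) i) ^ 2) ≤ ε) (i : ι)
    (hi : hardThreshold η w i = 0) :
    |2 * (R *ᵥ hardThreshold η w) i - μ i| ≤ β i := by
  have hqi := abs_le.mp ((abs_le_sqrt_sum_sq _ i).trans hq)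
  obtain ⟨h1, h2⟩ := hb i (hardThreshold_eq_zero_iff.mp hi)
  simp only [mulVec_sub, Pi.sub_apply] at hqi
  rw [abs_le]
  constructor <;> linarith

lemma sum_sq_residual_hardThreshold_le {R : Matrix ι ι ℝ} {μ β w : ι → ℝ} {η A ρ : ℝ}
    (ha : ∑ i ∈ univ.filter (fun i => w i ≠ 0 ∧ η ≤ |w i|),
        (2 * (R *ᵥ w) i - μ i + β i * Real.sign (w i)) ^ 2 ≤ A)
    (hq : √(∑ i, (2 * (R *ᵥ (hardThreshold η w - w)) i) ^ 2) ≤ ρ) :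
    ∑ i ∈ univ.filter (fun i => hardThreshold η w i ≠ 0),
        (2 * (R *ᵥ hardThreshold η w) i - μ i + β i * Real.sign (hardThreshold η w i)) ^ 2
      ≤ (√A + ρ) ^ 2 := by
  set q : ι → ℝ := fun i => 2 * (R *ᵥ (hardThreshold η w - w)) i
  have hlarge : ∀ i ∈ univ.filter (fun i => w i ≠ 0 ∧ η ≤ |w i|),
      2 * (R *ᵥ hardThreshold η w) i - μ i + β i * Real.sign (hardThreshold η w i)
        = (2 * (R *ᵥ w) i - μ i + β i * Real.sign (w i)) + q i := by
    intro i hi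
    rw [hardThreshold_of_le (mem_filter.mp hi).2.2]
    simp only [q, mulVec_sub, Pi.sub_apply]
    ring
  have hρ : 0 ≤ ρ := (Real.sqrt_nonneg _).trans hq
  rw [filter_hardThreshold_ne_zero, sum_congr rfl fun i hi => by rw [hlarge i hi],
    ← Real.sqrt_le_left (by positivity)]
  calc _ ≤ _ := sqrt_sum_add_sq_le _ _ _
    _ ≤ √A + ρ := add_le_add (Real.sqrt_le_sqrt ha) <| (Real.sqrt_le_sqrt <|
        sum_le_sum_of_subset_of_nonneg (subset_univ _) fun i _ _ => sq_nonneg (q i)).trans hq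

end

theorem stmt16_general (N : ℕ) (R : Matrix (Fin N) (Fin N) ℝ) (μ β : Fin N → ℝ)
    (hR : R.PosDef) (hβ : ∀ i, 0 ≤ β i)
    (α₀ : ℝ) (hα₀ : 0 < α₀)
    (heig : ∀ v : Fin N → ℝ, α₀ * ∑ i, (v i) ^ 2 ≤ v ⬝ᵥ (R *ᵥ v))
    (M : ℝ)
    (hM : ∀ v : Fin N → ℝ, Real.sqrt (∑ i, ((R *ᵥ v) i) ^ 2)
        ≤ M / 2 * Real.sqrt (∑ i, (v i) ^ 2))
    (ε : ℝ) (hε : 0 < ε)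
    (η : ℝ) (hη : η < min ε (Real.sqrt (ε * α₀)) / (Real.sqrt N * M))
    (Ψ : (Fin N → ℝ) → ℝ)
    (hΨ : ∀ w, Ψ w = w ⬝ᵥ (R *ᵥ w) - w ⬝ᵥ μ + ∑ i, β i * |w i|)
    (wstar wt : Fin N → ℝ)
    (ha : ∑ i ∈ Finset.univ.filter (fun i => wt i ≠ 0 ∧ η ≤ |wt i|),
        (2 * (R *ᵥ wt) i - μ i + β i * Real.sign (wt i)) ^ 2 ≤ 2 * ε * α₀)
    (hb : ∀ i, (wt i = 0 ∨ |wt i| < η) →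
        -β i + ε ≤ 2 * (R *ᵥ wt) i - μ i ∧ 2 * (R *ᵥ wt) i - μ i ≤ β i - ε)
    (ζ : Fin N → ℝ)
    (hζ : ∀ i, ζ i = if wt i = 0 ∨ |wt i| < η then 0 else wt i) :
    Ψ ζ ≤ Ψ wstar + (Real.sqrt 2 + 1) ^ 2 / 2 * ε := by
  obtain rfl : Ψ = lassoObjective R μ β := funext hΨ
  obtain rfl : ζ = hardThreshold η wt := funext hζ
  have hq : √(∑ i, (2 * (R *ᵥ (hardThreshold η wt - wt)) i) ^ 2) < min ε √(ε * α₀) :=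
    sqrt_sum_sq_two_mulVec_lt (by positivity) hM (by rwa [Fintype.card_fin])
      fun _ h => abs_hardThreshold_sub_lt h
  have hεα₀ : (√(2 * ε * α₀) + √(ε * α₀)) ^ 2 = (√2 + 1) ^ 2 * (ε * α₀) := by
    rw [mul_assoc, Real.sqrt_mul zero_le_two, ← add_one_mul, mul_pow, Real.sq_sqrt (by positivity)]
  calc _ ≤ _ := lassoObjective_le_add_sum_sq_div (isHermitian_iff_isSymm.mp hR.isHermitian) hα₀
        heig hβ (abs_grad_hardThreshold_le hb (hq.le.trans (min_le_left _ _))) wstar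
    _ ≤ lassoObjective R μ β wstar + (√2 + 1) ^ 2 * (ε * α₀) / (4 * α₀) := by
        rw [← hεα₀]
        gcongr
        exact sum_sq_residual_hardThreshold_le ha (hq.le.trans (min_le_right _ _))
    _ ≤ _ := by
        rw [mul_div_assoc, mul_div_mul_right _ _ hα₀.ne']
        linarith [show 0 ≤ (√2 + 1) ^ 2 * ε by positivity]

/-- Theorem 3, practical stopping criterion: truncating the
small entries of an approximately stationary point `w̃` gives a portfolio `ζ`
with `Ψ(ζ) ≤ Ψ(w*) + ((√2+1)²/2)ε`.  The eigenvalue bound is expressed via the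
quadratic form and the operator-norm bound via `‖Rv‖ ≤ (M/2)‖v‖` in the
Euclidean norm. -/
theorem stmt16 (N : ℕ) (R : Matrix (Fin N) (Fin N) ℝ) (μ β : Fin N → ℝ)
    (hR : R.PosDef) (hβ : ∀ i, 0 ≤ β i)
    (α₀ : ℝ) (hα₀ : 0 < α₀)
    (heig : ∀ v : Fin N → ℝ, α₀ * ∑ i, (v i) ^ 2 ≤ v ⬝ᵥ (R *ᵥ v))
    (M : ℝ)
    (hM : ∀ v : Fin N → ℝ, Real.sqrt (∑ i, ((R *ᵥ v) i) ^ 2)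
        ≤ M / 2 * Real.sqrt (∑ i, (v i) ^ 2))
    (ε : ℝ) (hε : 0 < ε)
    (η : ℝ) (hη : η < min ε (Real.sqrt (ε * α₀)) / (Real.sqrt N * M))
    (Ψ : (Fin N → ℝ) → ℝ)
    (hΨ : ∀ w, Ψ w = w ⬝ᵥ (R *ᵥ w) - w ⬝ᵥ μ + ∑ i, β i * |w i|)
    (wstar wt : Fin N → ℝ) (hstar : ∀ v, Ψ wstar ≤ Ψ v)
    (ha : ∑ i ∈ Finset.univ.filter (fun i => wt i ≠ 0 ∧ η ≤ |wt i|),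
        (2 * (R *ᵥ wt) i - μ i + β i * Real.sign (wt i)) ^ 2 ≤ 2 * ε * α₀)
    (hb : ∀ i, (wt i = 0 ∨ |wt i| < η) →
        -β i + ε ≤ 2 * (R *ᵥ wt) i - μ i ∧ 2 * (R *ᵥ wt) i - μ i ≤ β i - ε)
    (ζ : Fin N → ℝ)
    (hζ : ∀ i, ζ i = if wt i = 0 ∨ |wt i| < η then 0 else wt i) :
    Ψ ζ ≤ Ψ wstar + (Real.sqrt 2 + 1) ^ 2 / 2 * ε :=
  stmt16_general N R μ β hR hβ α₀ hα₀ heig M hM ε hε η hη Ψ hΨ wstar wt ha hb ζ hζ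
end
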